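/- arXiv:2212.04558 — 4 statements merged into one kernel-verified Lean document; each statement's English description precedes it below -/
import Mathlib

section
/- Let A be a finitely generated free abelian group and let ω : A × A → ℤ be an antisymmetric bilinear pairing. Suppose L and L' are subgroups of A such that ω vanishes identically on L × L and on L' × L', and suppose that the quotient group A/(L+L') has no 2-torsion (i.e., every β ∈ A with 2β ∈ L+L' satisfies β ∈ L+L'). Then for every α ∈ L and α' ∈ L' such that α + α' = 2β for some β ∈ A, the integer ω(α, α') is divisible by 4. -/
/-- Lemma 6.2 of the paper: if `A` is a finitely generated free abelian group,
`ω` an antisymmetric bilinear pairing vanishing on `L × L` and `L' × L'`,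
and `A/(L+L')` has no 2-torsion, then for `α ∈ L`, `α' ∈ L'` with `α + α' = 2β`,
`ω(α, α')` is divisible by 4. -/
theorem stmt_0 (A : Type*) [AddCommGroup A] [Module.Free ℤ A] [Module.Finite ℤ A]
    (ω : A →ₗ[ℤ] A →ₗ[ℤ] ℤ)
    (hanti : ∀ x y : A, ω x y = - ω y x)
    (L L' : AddSubgroup A)
    (hL : ∀ x ∈ L, ∀ y ∈ L, ω x y = 0)
    (hL' : ∀ x ∈ L', ∀ y ∈ L', ω x y = 0)
    (htor : ∀ β : A, (2 : ℤ) • β ∈ L ⊔ L' → β ∈ L ⊔ L')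
    (α : A) (hα : α ∈ L) (α' : A) (hα' : α' ∈ L')
    (β : A) (hβ : α + α' = (2 : ℤ) • β) :
    (4 : ℤ) ∣ ω α α' := by
  have hβmem : β ∈ L ⊔ L' := by
    apply htor
    rw [← hβ]
    exact AddSubgroup.add_mem_sup hα hα'
  obtain ⟨γ, hγ, γ', hγ', hsum⟩ := (AddSubgroup.mem_sup).1 hβmem
  -- δ := α - 2γ = 2γ' - α' lies in L ∩ L'
  set δ : A := α - (2 : ℤ) • γ with hδdef
  have hδL : δ ∈ L := L.sub_mem hα (by simpa using L.zsmul_mem hγ 2)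
  have hδeq : δ = (2 : ℤ) • γ' - α' := by
    have : α + α' = (2 : ℤ) • γ + (2 : ℤ) • γ' := by
      rw [hβ, ← hsum, smul_add]
    simp only [hδdef]
    linear_combination (norm := abel) this
  have hδL' : δ ∈ L' := by
    rw [hδeq]
    exact L'.sub_mem (by simpa using L'.zsmul_mem hγ' 2) hα'
  have hα_eq : α = (2 : ℤ) • γ + δ := by simp [hδdef]
  have hα'_eq : α' = (2 : ℤ) • γ' - δ := by
    rw [hδeq]; abel
  have e1 : ω γ δ = 0 := hL γ hγ δ hδL
  have e2 : ω δ γ' = 0 := hL' δ hδL' γ' hγ'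
  have e3 : ω δ δ = 0 := hL δ hδL δ hδL
  have : ω α α' = 4 * ω γ γ' := by
    rw [hα_eq, hα'_eq]
    simp [map_add, map_sub, map_smul, e1, e2, e3]
    ring
  rw [this]
  exact ⟨ω γ γ', rfl⟩
end

section
/- Let A be a finitely generated free abelian group and let ω : A × A → ℤ be an antisymmetric ℤ-bilinear form (ω(x,y) = −ω(y,x) for all x, y ∈ A). Let L and L' be subgroups of A such that ω vanishes identically on L × L and on L' × L', and such that A/(L+L') has no 2-torsion (i.e., every β ∈ A with 2β ∈ L+L' satisfies β ∈ L+L'). Then for every s ∈ 2A, every r ∈ L, and every b ∈ L' with r + b ∈ 2A, the integer ω(s, b − r) + ω(r, b) is divisible by 4. -/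
/-- The claim, from the proof of Theorem 6.1 of the paper, that the writhe
`w(D̄) = ω(s, b−r) + ω(r, b)` of a null-homologous compound handle-slide is
divisible by 4: here `A` is a finitely generated free abelian group, `ω` an
antisymmetric bilinear pairing vanishing on `L × L` and `L' × L'`, `A/(L+L')`
has no 2-torsion, `s ∈ 2A`, `r ∈ L`, `b ∈ L'`, and `r + b ∈ 2A`. -/
theorem stmt_6 (A : Type*) [AddCommGroup A] [Module.Free ℤ A] [Module.Finite ℤ A]
    (ω : A →ₗ[ℤ] A →ₗ[ℤ] ℤ)
    (hanti : ∀ x y : A, ω x y = - ω y x)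
    (L L' : AddSubgroup A)
    (hL : ∀ x ∈ L, ∀ y ∈ L, ω x y = 0)
    (hL' : ∀ x ∈ L', ∀ y ∈ L', ω x y = 0)
    (htor : ∀ β : A, (2 : ℤ) • β ∈ L ⊔ L' → β ∈ L ⊔ L')
    (s : A) (hs : ∃ t : A, s = (2 : ℤ) • t)
    (r : A) (hr : r ∈ L) (b : A) (hb : b ∈ L')
    (hrb : ∃ u : A, r + b = (2 : ℤ) • u) :
    (4 : ℤ) ∣ (ω s (b - r) + ω r b) := by
  obtain ⟨t, ht⟩ := hs
  obtain ⟨u, hu⟩ := hrb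
  have hu2 : (2 : ℤ) • u ∈ L ⊔ L' := by
    rw [← hu]
    exact add_mem (AddSubgroup.mem_sup_left hr) (AddSubgroup.mem_sup_right hb)
  obtain ⟨l, hl, l', hl', hll⟩ := (AddSubgroup.mem_sup).1 (htor u hu2)
  -- basic vanishing facts
  have hrr : ω r r = 0 := by have := hanti r r; linarith
  have hrl : ω r l = 0 := hL r hr l hl
  have hbl' : ω b l' = 0 := hL' b hb l' hl'
  have hl'l' : ω l' l' = 0 := hL' l' hl' l' hl'
  -- b = 2u - r and r = 2u - b
  have hb' : b = (2 : ℤ) • u - r := by rw [← hu]; abel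
  have hr' : r = (2 : ℤ) • u - b := by rw [← hu]; abel
  have hu' : u = l + l' := hll.symm
  refine ⟨ω t (u - r) + ω l l', ?_⟩
  have e1 : ω s (b - r) = 4 * ω t (u - r) := by
    have : b - r = (2 : ℤ) • (u - r) := by rw [hb']; module
    rw [ht, this]
    simp only [map_smul, LinearMap.smul_apply, smul_eq_mul]
    ring
  have e2 : ω r b = 4 * ω l l' := by
    have h1 : ω r b = 2 * ω r u := by
      rw [hb', map_sub, map_smul, hrr, smul_eq_mul]; ring
    have h2 : ω r u = ω r l' := by
      rw [hu', map_add, hrl]; ring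
    have h3 : ω r l' = 2 * ω l l' := by
      rw [hr', map_sub, map_smul, LinearMap.sub_apply, LinearMap.smul_apply, hbl',
        hu', map_add, LinearMap.add_apply, hl'l', smul_eq_mul]
      ring
    rw [h1, h2, h3]; ring
  rw [e1, e2]; ring
end

section
/- Let A be a finitely generated free abelian group and let ω : A × A → ℤ be an antisymmetric ℤ-bilinear form. Let 𝒜̄ be the associated twisted algebra with product [γ]·[η] = i^{−ω(γ,η)}[γ+η], let 𝒜 be the quotient of 𝒜̄ by the two-sided ideal generated by the elements [2γ] − 1 for all γ ∈ A, and let π : 𝒜̄ → 𝒜 be the quotient map. If γ, η, β ∈ A satisfy γ = η + 2β, then π([γ]) = i^{ω(η,γ)}·π([η]); in particular π([γ]) = ±π([η]) whenever γ and η have the same image in A/2A. -/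
/-- The twisted product on `𝒜̄`, the space of finitely supported functions
`A → ℂ`: the bilinear extension of `[γ]·[η] = i^{−ω(γ,η)}[γ+η]`. -/
noncomputable def twistedMul {A : Type*} [AddCommGroup A]
    (ω : A →ₗ[ℤ] A →ₗ[ℤ] ℤ) (f g : A →₀ ℂ) : A →₀ ℂ :=
  f.sum fun γ a => g.sum fun η b =>
    Finsupp.single (γ + η) (a * b * Complex.I ^ (-(ω γ η)))

lemma tm_single {A : Type*} [AddCommGroup A] (ω : A →ₗ[ℤ] A →ₗ[ℤ] ℤ)
    (γ η : A) (a b : ℂ) :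
    twistedMul ω (Finsupp.single γ a) (Finsupp.single η b)
      = Finsupp.single (γ + η) (a * b * Complex.I ^ (-(ω γ η))) := by
  simp [twistedMul, Finsupp.sum_single_index]

lemma tm_sub {A : Type*} [AddCommGroup A] (ω : A →ₗ[ℤ] A →ₗ[ℤ] ℤ)
    (f g h : A →₀ ℂ) :
    twistedMul ω f (g - h) = twistedMul ω f g - twistedMul ω f h := by
  unfold twistedMul
  rw [← Finsupp.sum_sub]
  refine Finsupp.sum_congr fun γ _ => ?_
  rw [Finsupp.sum_sub_index]
  intro η b1 b2
  rw [mul_sub, sub_mul, Finsupp.single_sub]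

lemma tm_one_right {A : Type*} [AddCommGroup A] (ω : A →ₗ[ℤ] A →ₗ[ℤ] ℤ)
    (f : A →₀ ℂ) : twistedMul ω f (Finsupp.single 0 1) = f := by
  have h : (f.sum fun γ a => (Finsupp.single (0:A) (1:ℂ)).sum fun η b =>
      Finsupp.single (γ + η) (a * b * Complex.I ^ (-(ω γ η))))
      = f.sum fun γ a => Finsupp.single γ a := by
    apply Finsupp.sum_congr
    intro γ _
    rw [Finsupp.sum_single_index] <;> simp
  rw [twistedMul, h, Finsupp.sum_single]

/-- The two-sided ideal of `𝒜̄` generated by the elements `[2γ] − [0]`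
(`[0]` being the unit), as a ℂ-subspace of `A →₀ ℂ`: the span of all products
`a·([2γ]−[0])·b`. -/
noncomputable def twistedIdeal {A : Type*} [AddCommGroup A]
    (ω : A →ₗ[ℤ] A →ₗ[ℤ] ℤ) : Submodule ℂ (A →₀ ℂ) :=
  Submodule.span ℂ { x | ∃ (a b : A →₀ ℂ) (γ : A),
    x = twistedMul ω (twistedMul ω a
      (Finsupp.single ((2 : ℤ) • γ) (1 : ℂ) - Finsupp.single 0 1)) b }

lemma eq7 (A : Type*) [AddCommGroup A]
    (ω : A →ₗ[ℤ] A →ₗ[ℤ] ℤ)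
    (hanti : ∀ x y : A, ω x y = - ω y x)
    (γ η β : A) (hβ : γ = η + (2 : ℤ) • β) :
        (twistedIdeal ω).mkQ (Finsupp.single γ (1 : ℂ))
          = Complex.I ^ (ω η γ) • (twistedIdeal ω).mkQ (Finsupp.single η 1) := by
  have hηη : ω η η = 0 := by have := hanti η η; omega
  have hωγ : ω η γ = 2 * ω η β := by
    rw [hβ]; simp [map_add, map_smul, hηη]
  set c : ℂ := Complex.I ^ (-(ω η ((2:ℤ) • β))) with hc
  have hmem : Finsupp.single γ c - Finsupp.single η 1 ∈ twistedIdeal ω := by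
    apply Submodule.subset_span
    refine ⟨Finsupp.single η 1, Finsupp.single 0 1, β, ?_⟩
    rw [tm_one_right, tm_sub, tm_single, tm_single, hβ]
    simp [hc]
  have h1 : (twistedIdeal ω).mkQ (Finsupp.single γ c)
      = (twistedIdeal ω).mkQ (Finsupp.single η 1) := by
    rw [← sub_eq_zero, ← map_sub, Submodule.mkQ_apply, Submodule.Quotient.mk_eq_zero]
    exact hmem
  have h2 : Finsupp.single γ c = c • Finsupp.single γ (1:ℂ) := by
    rw [Finsupp.smul_single', mul_one]
  have hcd : Complex.I ^ (ω η γ) * c = 1 := by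
    rw [hc, hβ]
    simp only [map_add, map_smul, hηη, smul_eq_mul, zero_add]
    rw [← zpow_add₀ Complex.I_ne_zero]
    simp
  rw [h2, map_smul] at h1
  calc (twistedIdeal ω).mkQ (Finsupp.single γ (1:ℂ))
      = (Complex.I ^ (ω η γ) * c) • (twistedIdeal ω).mkQ (Finsupp.single γ (1:ℂ)) := by
        rw [hcd, one_smul]
    _ = Complex.I ^ (ω η γ) • (c • (twistedIdeal ω).mkQ (Finsupp.single γ (1:ℂ))) := by
        rw [mul_smul]
    _ = _ := by rw [h1]

/-- Equation (7) of the paper: in the quotient `𝒜` of `𝒜̄` by the ideal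
generated by the `[2γ] − 1`, with quotient map `π`, if `γ = η + 2β` then
`π([γ]) = i^{ω(η,γ)}·π([η])`; in particular `π([γ]) = ±π([η])` whenever `γ`
and `η` have the same image in `A/2A`. -/
theorem stmt_9 (A : Type*) [AddCommGroup A] [Module.Free ℤ A] [Module.Finite ℤ A]
    (ω : A →ₗ[ℤ] A →ₗ[ℤ] ℤ)
    (hanti : ∀ x y : A, ω x y = - ω y x) :
    (∀ γ η β : A, γ = η + (2 : ℤ) • β →
        (twistedIdeal ω).mkQ (Finsupp.single γ (1 : ℂ))
          = Complex.I ^ (ω η γ) • (twistedIdeal ω).mkQ (Finsupp.single η 1)) ∧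
    (∀ γ η : A, (∃ β : A, γ = η + (2 : ℤ) • β) →
        (twistedIdeal ω).mkQ (Finsupp.single γ (1 : ℂ))
            = (twistedIdeal ω).mkQ (Finsupp.single η 1) ∨
          (twistedIdeal ω).mkQ (Finsupp.single γ (1 : ℂ))
            = - (twistedIdeal ω).mkQ (Finsupp.single η 1)) := by
  refine ⟨fun γ η β hβ => eq7 A ω hanti γ η β hβ, ?_⟩
  rintro γ η ⟨β, hβ⟩
  have h1 := eq7 A ω hanti γ η β hβ
  have hηη : ω η η = 0 := by have := hanti η η; omega
  have hωγ : ω η γ = 2 * ω η β := by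
    rw [hβ]; simp [map_add, map_smul, hηη]
  have hI : Complex.I ^ (ω η γ) = 1 ∨ Complex.I ^ (ω η γ) = -1 := by
    rw [hωγ, zpow_mul]
    have h2 : Complex.I ^ (2:ℤ) = -1 := by
      norm_num [zpow_two, Complex.I_mul_I]
    rw [h2]
    rcases Int.even_or_odd (ω η β) with h | h
    · left; exact h.neg_one_zpow
    · right; exact h.neg_one_zpow
  rcases hI with h | h
  · left; rw [h1, h, one_smul]
  · right; rw [h1, h, neg_smul, one_smul]
end

section
/- Let A be a finitely generated free abelian group and let ω : A × A → ℤ be an antisymmetric ℤ-bilinear form. Let 𝒜̄ be the associated twisted algebra with product [γ]·[η] = i^{−ω(γ,η)}[γ+η], let 𝒜 be the quotient of 𝒜̄ by the two-sided ideal generated by the elements [2γ] − 1 for all γ ∈ A, and let π : 𝒜̄ → 𝒜 be the quotient map. Let S : A/2A → A be any set-theoretic section of the reduction map A → A/2A. Then the family (π([S(u)]))_{u ∈ A/2A} is a basis of 𝒜 as a complex vector space; in particular, any choice of representatives of the elements of A/2A yields a basis of 𝒜. -/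
/-- The subgroup `2A` of doubled elements of an abelian group `A`. -/
def doubleSub (A : Type*) [AddCommGroup A] : AddSubgroup A :=
  (AddMonoidHom.mk' (fun a => (2 : ℤ) • a) (fun a b => smul_add (2 : ℤ) a b)).range

/-!
Writing `γ̄` for the class of `γ` in `A/2A`, the linear map `[γ] ↦ i^{ω(S γ̄, γ)} [γ̄]` from `𝒜̄`
to the group algebra `ℂ[A/2A]` kills the ideal: by antisymmetry, the phases it produces on
`[α]·[2γ]·[β]` and on `[α]·[β]` differ by `i^{2ω(S(α+β) − α + β, γ)}`, and this is `1` because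
`S(α+β) − α + β ∈ 2A`. Since it sends `[S u]` to `[u]`, the family is independent in `𝒜`. It spans
because `[s + 2d] − i^{ω(s, 2d)} [s] = i^{ω(s, 2d)} [s]·([2d] − 1)` lies in the ideal.
-/

open Complex

theorem Complex.I_zpow_add_four_mul (n k : ℤ) : I ^ (n + 4 * k) = I ^ n := by
  rw [I_zpow_eq_zpow_mod, Int.add_mul_emod_self_left, ← I_zpow_eq_zpow_mod]

section TwistedMul

variable {A : Type*} [AddCommGroup A] (ω : A →ₗ[ℤ] A →ₗ[ℤ] ℤ)

theorem twistedMul_single_single (α η : A) (x y : ℂ) :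
    twistedMul ω (Finsupp.single α x) (Finsupp.single η y)
      = Finsupp.single (α + η) (x * y * I ^ (-(ω α η))) := by
  unfold twistedMul
  rw [Finsupp.sum_single_index (by simp), Finsupp.sum_single_index (by simp)]

theorem twistedMul_add_left (f f' g : A →₀ ℂ) :
    twistedMul ω (f + f') g = twistedMul ω f g + twistedMul ω f' g := by
  unfold twistedMul
  refine Finsupp.sum_add_index' (by simp) fun γ a a' => ?_
  rw [← Finsupp.sum_add]
  exact Finsupp.sum_congr fun η _ => by rw [add_mul, add_mul, Finsupp.single_add]

theorem twistedMul_add_right (f g g' : A →₀ ℂ) :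
    twistedMul ω f (g + g') = twistedMul ω f g + twistedMul ω f g' := by
  unfold twistedMul
  rw [← Finsupp.sum_add]
  refine Finsupp.sum_congr fun γ _ => Finsupp.sum_add_index' (by simp) fun η b b' => ?_
  rw [mul_add, add_mul, Finsupp.single_add]

theorem twistedMul_zero_left (g : A →₀ ℂ) : twistedMul ω 0 g = 0 :=
  (AddMonoidHom.mk' (twistedMul ω · g) (twistedMul_add_left ω · · g)).map_zero

theorem twistedMul_zero_right (f : A →₀ ℂ) : twistedMul ω f 0 = 0 :=
  (AddMonoidHom.mk' (twistedMul ω f) (twistedMul_add_right ω f)).map_zero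

theorem twistedMul_sub_left (f f' g : A →₀ ℂ) :
    twistedMul ω (f - f') g = twistedMul ω f g - twistedMul ω f' g :=
  (AddMonoidHom.mk' (twistedMul ω · g) (twistedMul_add_left ω · · g)).map_sub f f'

theorem twistedMul_sub_right (f g g' : A →₀ ℂ) :
    twistedMul ω f (g - g') = twistedMul ω f g - twistedMul ω f g' :=
  (AddMonoidHom.mk' (twistedMul ω f) (twistedMul_add_right ω f)).map_sub g g'

theorem twistedIdeal_mkQ_single_add_two_smul (s d : A) :
    (twistedIdeal ω).mkQ (Finsupp.single (s + (2 : ℤ) • d) 1)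
      = I ^ ω s ((2 : ℤ) • d) • (twistedIdeal ω).mkQ (Finsupp.single s 1) := by
  set n := ω s ((2 : ℤ) • d)
  have hgen : Finsupp.single (s + (2 : ℤ) • d) (I ^ (-n)) - Finsupp.single s 1
      ∈ twistedIdeal ω := by
    refine Submodule.subset_span ⟨Finsupp.single s 1, Finsupp.single 0 1, d, ?_⟩
    simp [twistedMul_sub_left, twistedMul_sub_right, twistedMul_single_single, n]
  have hscale : Finsupp.single (s + (2 : ℤ) • d) (1 : ℂ)
      = I ^ n • Finsupp.single (s + (2 : ℤ) • d) (I ^ (-n)) := by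
    rw [Finsupp.smul_single, smul_eq_mul, ← zpow_add₀ I_ne_zero, add_neg_cancel, zpow_zero]
  have hquot : (twistedIdeal ω).mkQ (Finsupp.single (s + (2 : ℤ) • d) (I ^ (-n)))
      = (twistedIdeal ω).mkQ (Finsupp.single s 1) := by
    rw [← sub_eq_zero, ← map_sub]
    exact (Submodule.Quotient.mk_eq_zero _).mpr hgen
  rw [hscale, map_smul, hquot]

end TwistedMul

section

variable {A : Type*} [AddCommGroup A] (ω : A →ₗ[ℤ] A →ₗ[ℤ] ℤ) (S : A ⧸ doubleSub A → A)

theorem two_smul_mem_doubleSub (d : A) : (2 : ℤ) • d ∈ doubleSub A := ⟨d, rfl⟩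

theorem exists_eq_add_two_smul_of_section
    (hS : ∀ u : A ⧸ doubleSub A, (QuotientAddGroup.mk (S u) : A ⧸ doubleSub A) = u) (δ : A) :
    ∃ d : A, δ = S δ + (2 : ℤ) • d := by
  obtain ⟨d, hd⟩ := (QuotientAddGroup.eq_iff_sub_mem (N := doubleSub A)).mp (hS δ).symm
  exact ⟨d, eq_add_of_sub_eq' hd.symm⟩

noncomputable def twistedReduce : (A →₀ ℂ) →ₗ[ℂ] (A ⧸ doubleSub A →₀ ℂ) :=
  Finsupp.lsum ℂ fun γ => I ^ ω (S γ) γ • Finsupp.lsingle (γ : A ⧸ doubleSub A)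

theorem twistedReduce_single (γ : A) (x : ℂ) :
    twistedReduce ω S (Finsupp.single γ x)
      = Finsupp.single (γ : A ⧸ doubleSub A) (I ^ ω (S γ) γ * x) := by
  simp [twistedReduce, Finsupp.smul_single]

theorem twistedReduce_single_section (hanti : ∀ x y : A, ω x y = - ω y x)
    (hS : ∀ u : A ⧸ doubleSub A, (QuotientAddGroup.mk (S u) : A ⧸ doubleSub A) = u)
    (u : A ⧸ doubleSub A) :
    twistedReduce ω S (Finsupp.single (S u) 1) = Finsupp.single u 1 := by
  have hzero : ω (S u) (S u) = 0 := by linarith [hanti (S u) (S u)]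
  rw [twistedReduce_single, hS, hzero, zpow_zero, one_mul]

theorem twistedReduce_single_generator_single (hanti : ∀ x y : A, ω x y = - ω y x)
    (hS : ∀ u : A ⧸ doubleSub A, (QuotientAddGroup.mk (S u) : A ⧸ doubleSub A) = u)
    (α β γ : A) (x y : ℂ) :
    twistedReduce ω S (twistedMul ω (twistedMul ω (Finsupp.single α x)
      (Finsupp.single ((2 : ℤ) • γ) 1 - Finsupp.single 0 1)) (Finsupp.single β y)) = 0 := by
  have hclass : ((α + (2 : ℤ) • γ + β : A) : A ⧸ doubleSub A) = ↑(α + β) := by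
    rw [add_right_comm]
    exact QuotientAddGroup.mk_add_of_mem _ (two_smul_mem_doubleSub γ)
  simp only [twistedMul_sub_right, twistedMul_sub_left, twistedMul_single_single, map_sub,
    twistedReduce_single, hclass, add_zero, ← Finsupp.single_sub, Finsupp.single_eq_zero,
    sub_eq_zero]
  set s := S ↑(α + β)
  obtain ⟨d, hd⟩ := exists_eq_add_two_smul_of_section S hS (α + β)
  have hd' : ω α γ + ω β γ = ω s γ + 2 * ω d γ := by
    simpa only [map_add, map_smul, LinearMap.add_apply, LinearMap.smul_apply, smul_eq_mul]
      using congrArg (ω · γ) hd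
  have hexp : ω s (α + (2 : ℤ) • γ + β) - ω α ((2 : ℤ) • γ) - ω (α + (2 : ℤ) • γ) β
      = ω s (α + β) - ω α β + 4 * (ω β γ - ω d γ) := by
    simp only [map_add, map_smul, LinearMap.add_apply, LinearMap.smul_apply, smul_eq_mul]
    linarith [hanti γ β]
  have hpow := congrArg (I ^ ·) hexp
  simp only [I_zpow_add_four_mul, zpow_sub₀ I_ne_zero] at hpow
  simp only [map_zero, neg_zero, zpow_zero, zpow_neg]
  linear_combination x * y * hpow

theorem twistedReduce_generator (hanti : ∀ x y : A, ω x y = - ω y x)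
    (hS : ∀ u : A ⧸ doubleSub A, (QuotientAddGroup.mk (S u) : A ⧸ doubleSub A) = u)
    (a b : A →₀ ℂ) (γ : A) :
    twistedReduce ω S (twistedMul ω (twistedMul ω a
      (Finsupp.single ((2 : ℤ) • γ) 1 - Finsupp.single 0 1)) b) = 0 := by
  induction a using Finsupp.induction_linear with
  | zero => rw [twistedMul_zero_left, twistedMul_zero_left, map_zero]
  | add f g hf hg => rw [twistedMul_add_left, twistedMul_add_left, map_add, hf, hg, add_zero]
  | single α x =>
    induction b using Finsupp.induction_linear with
    | zero => rw [twistedMul_zero_right, map_zero]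
    | add f g hf hg => rw [twistedMul_add_right, map_add, hf, hg, add_zero]
    | single β y => exact twistedReduce_single_generator_single ω S hanti hS α β γ x y

theorem twistedIdeal_le_ker_twistedReduce (hanti : ∀ x y : A, ω x y = - ω y x)
    (hS : ∀ u : A ⧸ doubleSub A, (QuotientAddGroup.mk (S u) : A ⧸ doubleSub A) = u) :
    twistedIdeal ω ≤ LinearMap.ker (twistedReduce ω S) := by
  rw [twistedIdeal, Submodule.span_le]
  rintro _ ⟨a, b, γ, rfl⟩
  exact twistedReduce_generator ω S hanti hS a b γ

theorem linearIndependent_twistedIdeal_mkQ_single_section (hanti : ∀ x y : A, ω x y = - ω y x)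
    (hS : ∀ u : A ⧸ doubleSub A, (QuotientAddGroup.mk (S u) : A ⧸ doubleSub A) = u) :
    LinearIndependent ℂ (fun u : A ⧸ doubleSub A =>
      (twistedIdeal ω).mkQ (Finsupp.single (S u) (1 : ℂ))) := by
  let ψ := (twistedIdeal ω).liftQ (twistedReduce ω S)
    (twistedIdeal_le_ker_twistedReduce ω S hanti hS)
  refine LinearIndependent.of_comp ψ ?_
  have hψ : ψ ∘ (fun u => (twistedIdeal ω).mkQ (Finsupp.single (S u) 1))
      = fun u => Finsupp.single u 1 := by
    funext u
    exact twistedReduce_single_section ω S hanti hS u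
  rw [hψ]
  exact Finsupp.linearIndependent_single_one ℂ _

theorem span_twistedIdeal_mkQ_single_section
    (hS : ∀ u : A ⧸ doubleSub A, (QuotientAddGroup.mk (S u) : A ⧸ doubleSub A) = u) :
    Submodule.span ℂ (Set.range (fun u : A ⧸ doubleSub A =>
      (twistedIdeal ω).mkQ (Finsupp.single (S u) (1 : ℂ)))) = ⊤ := by
  rw [eq_top_iff, ← (twistedIdeal ω).range_mkQ, LinearMap.range_eq_map,
    ← Finsupp.basisSingleOne.span_eq, Submodule.map_span, Submodule.span_le]
  rintro _ ⟨_, ⟨γ, rfl⟩, rfl⟩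
  obtain ⟨d, hd⟩ := exists_eq_add_two_smul_of_section S hS γ
  have hγ : (twistedIdeal ω).mkQ (Finsupp.single γ 1)
      = I ^ ω (S γ) ((2 : ℤ) • d) • (twistedIdeal ω).mkQ (Finsupp.single (S γ) 1) := by
    rw [← twistedIdeal_mkQ_single_add_two_smul, ← hd]
  rw [Finsupp.coe_basisSingleOne, hγ]
  exact Submodule.smul_mem _ _ (Submodule.subset_span ⟨γ, rfl⟩)

end

theorem stmt_10_general (A : Type*) [AddCommGroup A]
    (ω : A →ₗ[ℤ] A →ₗ[ℤ] ℤ)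
    (hanti : ∀ x y : A, ω x y = - ω y x)
    (S : A ⧸ doubleSub A → A)
    (hS : ∀ u : A ⧸ doubleSub A, (QuotientAddGroup.mk (S u) : A ⧸ doubleSub A) = u) :
    LinearIndependent ℂ (fun u : A ⧸ doubleSub A =>
        (twistedIdeal ω).mkQ (Finsupp.single (S u) (1 : ℂ))) ∧
    Submodule.span ℂ (Set.range (fun u : A ⧸ doubleSub A =>
        (twistedIdeal ω).mkQ (Finsupp.single (S u) (1 : ℂ)))) = ⊤ :=
  ⟨linearIndependent_twistedIdeal_mkQ_single_section ω S hanti hS,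
    span_twistedIdeal_mkQ_single_section ω S hS⟩

/-- Section 5 of the paper: any choice of representatives of the elements of
`A/2A` yields a basis of the quotient algebra `𝒜`.  Formally: for any
set-theoretic section `S : A/2A → A` of the reduction map, the family
`π([S(u)])`, `u ∈ A/2A`, is linearly independent and spans `𝒜` over `ℂ`. -/
theorem stmt_10 (A : Type*) [AddCommGroup A] [Module.Free ℤ A] [Module.Finite ℤ A]
    (ω : A →ₗ[ℤ] A →ₗ[ℤ] ℤ)
    (hanti : ∀ x y : A, ω x y = - ω y x)
    (S : A ⧸ doubleSub A → A)
    (hS : ∀ u : A ⧸ doubleSub A, (QuotientAddGroup.mk (S u) : A ⧸ doubleSub A) = u) :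
    LinearIndependent ℂ (fun u : A ⧸ doubleSub A =>
        (twistedIdeal ω).mkQ (Finsupp.single (S u) (1 : ℂ))) ∧
    Submodule.span ℂ (Set.range (fun u : A ⧸ doubleSub A =>
        (twistedIdeal ω).mkQ (Finsupp.single (S u) (1 : ℂ)))) = ⊤ :=
  stmt_10_general A ω hanti S hS
end
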